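/- arXiv:2403.19457 — 4 statements merged into one kernel-verified Lean document; each statement's English description precedes it below -/
import Mathlib

section
/- The Gaussian Q-function admits the Craig representation: for all x ≥ 0, Q(x) = (1/π) ∫₀^{π/2} exp(−x²/(2 sin²θ)) dθ, where Q(x) = ∫ₓ^∞ (1/√(2π)) exp(−t²/2) dt. -/
/-!
The Craig integral `C x = ∫₀^{π/2} exp (-x² / (2 sin²θ)) dθ` tends to `0` as `x → ∞`,
so `C x = -∫ₓ^∞ C'`. Differentiating under the integral sign,
`C' x = -∫₀^{π/2} x / sin²θ · exp (-x² / (2 sin²θ)) dθ`,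
and the substitution `θ = arctan (x / u)`, for which `sin²θ = x² / (x² + u²)`, turns this into
`-exp (-x² / 2) ∫₀^∞ exp (-u² / 2) du = -√(2π) / 2 · exp (-x² / 2)`.
Hence `C x = √(2π) / 2 · ∫ₓ^∞ exp (-t² / 2) dt = π Q(x)`.
-/

open Real MeasureTheory Set Filter Topology

/-- The Gaussian Q-function: tail probability of a standard normal. -/
noncomputable def Qfun (x : ℝ) : ℝ :=
  ∫ t in Set.Ici x, (1 / Real.sqrt (2 * π)) * Real.exp (-t ^ 2 / 2)

theorem integrable_exp_neg_sq_div_two : Integrable fun t : ℝ => exp (-t ^ 2 / 2) := by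
  simpa [neg_div, div_eq_inv_mul] using integrable_exp_neg_mul_sq (b := 1 / 2) (by norm_num)

theorem integral_Ioi_exp_neg_sq_div_two :
    ∫ t in Ioi (0 : ℝ), exp (-t ^ 2 / 2) = √(2 * π) / 2 := by
  have h := integral_gaussian_Ioi (1 / 2)
  simp only [neg_mul, one_div, ← div_eq_inv_mul, neg_div] at h ⊢
  rw [h]
  congr 2
  field_simp

-- Also true for `s = 0`, where both sides degenerate through `y / 0 = 0`.
theorem hasDerivAt_exp_neg_sq_div (s y : ℝ) :
    HasDerivAt (fun y => exp (-y ^ 2 / (2 * s))) (-(y / s) * exp (-y ^ 2 / (2 * s))) y := by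
  convert (((hasDerivAt_id' y).fun_pow 2).fun_neg.div_const (2 * s)).exp using 1
  simp only [neg_mul, Nat.cast_ofNat, Nat.add_one_sub_one, pow_one, mul_one]
  ring

theorem div_mul_exp_neg_sq_div_le {y s : ℝ} (hy : 0 < y) (hs : 0 ≤ s) :
    y / s * exp (-y ^ 2 / (2 * s)) ≤ 2 / y := by
  rcases hs.eq_or_lt with rfl | hs
  · simp only [div_zero, mul_zero, exp_zero, mul_one]
    positivity
  have hc := add_one_le_exp (y ^ 2 / (2 * s))
  have hcs : 2 * s * (y ^ 2 / (2 * s)) = y ^ 2 := by field_simp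
  rw [neg_div, exp_neg, ← div_eq_mul_inv, div_div, div_le_div_iff₀ (by positivity) hy]
  nlinarith [mul_le_mul_of_nonneg_left hc (by positivity : (0:ℝ) ≤ 2 * s)]

theorem image_arctan_div_Ioi {x : ℝ} (hx : 0 < x) :
    (fun u => arctan (x / u)) '' Ioi 0 = Ioo 0 (π / 2) := by
  ext θ
  constructor
  · rintro ⟨u, hu, rfl⟩
    refine ⟨?_, arctan_lt_pi_div_two _⟩
    simpa using arctan_strictMono (div_pos hx hu)
  · rintro ⟨hθ₀, hθ₁⟩
    have htan : 0 < tan θ := tan_pos_of_pos_of_lt_pi_div_two hθ₀ hθ₁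
    refine ⟨x / tan θ, div_pos hx htan, ?_⟩
    show arctan (x / (x / tan θ)) = θ
    rw [div_div_cancel₀ hx.ne', arctan_tan (by linarith [pi_pos]) hθ₁]

theorem sin_arctan_div_sq (x : ℝ) {u : ℝ} (hu : u ≠ 0) :
    sin (arctan (x / u)) ^ 2 = x ^ 2 / (x ^ 2 + u ^ 2) := by
  rw [sin_arctan, div_pow, sq_sqrt (by positivity)]
  field_simp
  ring

theorem integral_Ioo_div_sin_sq_mul_exp {x : ℝ} (hx : 0 < x) :
    ∫ θ in Ioo 0 (π / 2), x / sin θ ^ 2 * exp (-x ^ 2 / (2 * sin θ ^ 2))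
      = √(2 * π) / 2 * exp (-x ^ 2 / 2) := by
  have hderiv : ∀ u ∈ Ioi (0 : ℝ),
      HasDerivWithinAt (fun u => arctan (x / u)) (-(x / (x ^ 2 + u ^ 2))) (Ioi 0) u := by
    intro u (hu : 0 < u)
    refine (((hasDerivAt_inv (ne_of_gt hu)).const_mul x).arctan.congr_deriv ?_).hasDerivWithinAt
    field_simp
    ring
  have hinj : InjOn (fun u => arctan (x / u)) (Ioi 0) := by
    intro a (ha : 0 < a) b (hb : 0 < b) hab
    have h := arctan_injective hab
    rw [div_eq_div_iff ha.ne' hb.ne'] at h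
    exact (mul_left_cancel₀ hx.ne' h).symm
  rw [← image_arctan_div_Ioi hx, integral_image_eq_integral_abs_deriv_smul measurableSet_Ioi
    hderiv hinj, ← integral_Ioi_exp_neg_sq_div_two, ← integral_mul_const]
  refine setIntegral_congr_fun measurableSet_Ioi fun u (hu : 0 < u) => ?_
  have hxu : 0 < x ^ 2 + u ^ 2 := by positivity
  simp only [smul_eq_mul, sin_arctan_div_sq x hu.ne', abs_neg, abs_of_pos (div_pos hx hxu)]
  rw [show -x ^ 2 / (2 * (x ^ 2 / (x ^ 2 + u ^ 2))) = -x ^ 2 / 2 + -u ^ 2 / 2 by field_simp; ring,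
    exp_add]
  field_simp

noncomputable def craigIntegral (x : ℝ) : ℝ :=
  ∫ θ in (0 : ℝ)..(π / 2), exp (-x ^ 2 / (2 * sin θ ^ 2))

theorem norm_exp_neg_sq_div_le_one (x s : ℝ) : ‖exp (-x ^ 2 / (2 * s ^ 2))‖ ≤ 1 := by
  rw [norm_of_nonneg (exp_pos _).le, exp_le_one_iff]
  exact div_nonpos_of_nonpos_of_nonneg (neg_nonpos.2 (sq_nonneg x)) (by positivity)

theorem aestronglyMeasurable_craigIntegrand (x : ℝ) {μ : Measure ℝ} :
    AEStronglyMeasurable (fun θ => exp (-x ^ 2 / (2 * sin θ ^ 2))) μ :=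
  (measurable_exp.comp (measurable_const.div (by fun_prop))).aestronglyMeasurable

theorem intervalIntegrable_craigIntegrand (x a b : ℝ) :
    IntervalIntegrable (fun θ => exp (-x ^ 2 / (2 * sin θ ^ 2))) volume a b :=
  intervalIntegrable_const.mono_fun' (aestronglyMeasurable_craigIntegrand x)
    (ae_of_all _ fun θ => norm_exp_neg_sq_div_le_one x (sin θ))

theorem continuous_craigIntegral : Continuous craigIntegral :=
  intervalIntegral.continuous_of_dominated_interval (bound := fun _ => 1)
    (fun x => aestronglyMeasurable_craigIntegrand x)
    (fun x => ae_of_all _ fun θ _ => norm_exp_neg_sq_div_le_one x (sin θ))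
    intervalIntegrable_const (ae_of_all _ fun θ _ => by fun_prop)

theorem tendsto_craigIntegral_atTop : Tendsto craigIntegral atTop (𝓝 0) := by
  have hlim : ∀ θ ∈ uIoc 0 (π / 2),
      Tendsto (fun x => exp (-x ^ 2 / (2 * sin θ ^ 2))) atTop (𝓝 0) := by
    intro θ hθ
    rw [uIoc_of_le (by positivity)] at hθ
    have hsin : 0 < sin θ := sin_pos_of_pos_of_lt_pi hθ.1 (by linarith [hθ.2, pi_pos])
    simp_rw [neg_div]
    exact tendsto_exp_atBot.comp <| tendsto_neg_atTop_atBot.comp <|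
      (tendsto_pow_atTop two_ne_zero).atTop_div_const (by positivity)
  have h := intervalIntegral.tendsto_integral_filter_of_dominated_convergence (μ := volume)
    (fun _ => 1)
    (Eventually.of_forall fun x => aestronglyMeasurable_craigIntegrand x)
    (Eventually.of_forall fun x => ae_of_all _ fun θ _ => norm_exp_neg_sq_div_le_one x (sin θ))
    intervalIntegrable_const (ae_of_all _ hlim)
  rwa [intervalIntegral.integral_zero] at h

theorem hasDerivAt_craigIntegral {x : ℝ} (hx : 0 < x) :
    HasDerivAt craigIntegral (-(√(2 * π) / 2 * exp (-x ^ 2 / 2))) x := by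
  have hbound : ∀ y ∈ Metric.ball x (x / 2), ∀ θ : ℝ,
      ‖-(y / sin θ ^ 2) * exp (-y ^ 2 / (2 * sin θ ^ 2))‖ ≤ 4 / x := fun y hy θ => by
    have hy : x / 2 < y := by linarith [(abs_lt.1 (mem_ball_iff_norm.1 hy)).1]
    have hy₀ : 0 < y := by linarith
    rw [neg_mul, norm_neg, norm_of_nonneg (by positivity)]
    calc y / sin θ ^ 2 * exp (-y ^ 2 / (2 * sin θ ^ 2)) ≤ 2 / y :=
          div_mul_exp_neg_sq_div_le hy₀ (sq_nonneg _)
      _ ≤ 4 / x := by rw [div_le_div_iff₀ hy₀ hx]; linarith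
  obtain ⟨-, hderiv⟩ := intervalIntegral.hasDerivAt_integral_of_dominated_loc_of_deriv_le
    (F := fun y θ => exp (-y ^ 2 / (2 * sin θ ^ 2)))
    (F' := fun y θ => -(y / sin θ ^ 2) * exp (-y ^ 2 / (2 * sin θ ^ 2)))
    (bound := fun _ => 4 / x) (μ := volume) (a := 0) (b := π / 2)
    (Metric.ball_mem_nhds x (half_pos hx))
    (Eventually.of_forall fun y => aestronglyMeasurable_craigIntegrand y)
    (intervalIntegrable_craigIntegrand x _ _)
    ((measurable_const.div (by fun_prop)).neg.mul
      (measurable_exp.comp (measurable_const.div (by fun_prop)))).aestronglyMeasurable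
    (ae_of_all _ fun θ _ y hy => hbound y hy θ) intervalIntegrable_const
    (ae_of_all _ fun θ _ y _ => hasDerivAt_exp_neg_sq_div _ y)
  refine hderiv.congr_deriv ?_
  rw [intervalIntegral.integral_of_le (by positivity), integral_Ioc_eq_integral_Ioo]
  simp only [neg_mul, integral_neg, integral_Ioo_div_sin_sq_mul_exp hx]

theorem craigIntegral_eq_integral_Ioi {x : ℝ} (hx : 0 ≤ x) :
    craigIntegral x = √(2 * π) / 2 * ∫ t in Ioi x, exp (-t ^ 2 / 2) := by
  have hftc := integral_Ioi_of_hasDerivAt_of_tendsto continuous_craigIntegral.continuousWithinAt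
    (fun t ht => hasDerivAt_craigIntegral (hx.trans_lt ht))
    (integrable_exp_neg_sq_div_two.const_mul _).neg.integrableOn tendsto_craigIntegral_atTop
  rw [integral_neg, integral_const_mul] at hftc
  linarith

theorem stmt_8 (x : ℝ) (hx : 0 ≤ x) :
    Qfun x = (1 / π) * ∫ θ in (0:ℝ)..(π / 2), Real.exp (-x ^ 2 / (2 * Real.sin θ ^ 2)) := by
  change _ = 1 / π * craigIntegral x
  rw [Qfun, integral_Ici_eq_integral_Ioi, integral_const_mul, craigIntegral_eq_integral_Ioi hx]
  generalize ∫ t in Ioi x, exp (-t ^ 2 / 2) = I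
  have hsqrt : √(2 * π) ^ 2 = 2 * π := sq_sqrt (by positivity)
  field_simp
  linear_combination -I * hsqrt
end

section
/- For any a > 0 and positive integer N_r, (1/π) ∫₀^{π/2} (4 sin²θ / (4 sin²θ + a))^{N_r} dθ = μ^{N_r} · Σ_{k=0}^{N_r−1} C(N_r−1+k, k) (1 − μ)^k, where μ = (1/2)(1 − √(a/(4+a))). -/
/-!
Write `c = a / 4`, so that the integrand is `u ^ n` with `u = sin² θ / (sin² θ + c)`. Since
`u ^ n - u ^ (n + 1) = c sin²ⁿ θ / (sin² θ + c) ^ (n + 1)`, the integrals of `u ^ n` telescope to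
`π / 2` minus `c` times a sum of the moments `Kₙ = ∫ sin²ⁿ θ / (sin² θ + c) ^ (n + 1)`. Integrating
by parts gives `(2n + 1) Kₙ = 2 (n + 1) (1 + c) Kₙ₊₁`, and `K₀ = π / (2 √(c (1 + c)))`, so
`c Kₙ = (π / 2) √(c / (1 + c)) C(2n, n) (4 (1 + c))⁻ⁿ`.

With `μ = (1 - √(c / (1 + c))) / 2` one has `1 - 2μ = √(c / (1 + c))` and
`μ (1 - μ) = (4 (1 + c))⁻¹`, and Pascal's rule proves the polynomial identity
`2 μ ^ (m + 1) ∑_{k ≤ m} C(m + k, k) (1 - μ) ^ k = 1 - (1 - 2μ) ∑_{j ≤ m} C(2j, j) (μ (1 - μ)) ^ j`.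
-/

open Real intervalIntegral Finset

section PolynomialIdentity

variable {R : Type*} [CommRing R]

theorem sum_choose_mul_pow_pascal (q : R) (m : ℕ) :
    ∑ k ∈ range (m + 2), ((m + 1 + k).choose k : R) * q ^ k =
      ∑ k ∈ range (m + 2), ((m + k).choose k : R) * q ^ k +
        q * ∑ k ∈ range (m + 1), ((m + 1 + k).choose k : R) * q ^ k := by
  have pascal (k : ℕ) : ((m + 1 + (k + 1)).choose (k + 1) : R) * q ^ (k + 1) =
      ((m + (k + 1)).choose (k + 1) : R) * q ^ (k + 1) +
        q * (((m + 1 + k).choose k : R) * q ^ k) := by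
    rw [show m + 1 + (k + 1) = m + (k + 1) + 1 by omega, Nat.choose_succ_succ', Nat.cast_add,
      show m + (k + 1) = m + 1 + k by omega]
    ring
  rw [sum_range_succ', sum_range_succ' (fun k => ((m + k).choose k : R) * q ^ k)]
  simp only [pascal, sum_add_distrib, mul_sum, Nat.choose_zero_right]
  ring

theorem two_mul_choose_eq_centralBinom (m : ℕ) :
    2 * (2 * m + 1).choose (m + 1) = (m + 1).centralBinom := by
  rw [Nat.centralBinom_eq_two_mul_choose, show 2 * (m + 1) = 2 * m + 1 + 1 by ring,
    Nat.choose_succ_succ' (2 * m + 1) m, Nat.choose_symm_half]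
  ring

theorem two_mul_one_sub_mul_sum_choose_mul_pow (q : R) (m : ℕ) :
    2 * (1 - q) * ∑ k ∈ range (m + 2), ((m + 1 + k).choose k : R) * q ^ k =
      2 * ∑ k ∈ range (m + 1), ((m + k).choose k : R) * q ^ k +
        (1 - 2 * q) * (m + 1).centralBinom * q ^ (m + 1) := by
  have h := sum_choose_mul_pow_pascal q m
  rw [sum_range_succ _ (m + 1), sum_range_succ (fun k => ((m + k).choose k : R) * q ^ k),
    show m + 1 + (m + 1) = 2 * (m + 1) by omega, show m + (m + 1) = 2 * m + 1 by omega,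
    ← Nat.centralBinom_eq_two_mul_choose] at h
  have central := congrArg (Nat.cast (R := R)) (two_mul_choose_eq_centralBinom m)
  push_cast at central
  rw [sum_range_succ, show m + 1 + (m + 1) = 2 * (m + 1) by omega,
    ← Nat.centralBinom_eq_two_mul_choose]
  linear_combination 2 * h + q ^ (m + 1) * central

theorem two_mul_pow_mul_sum_choose_mul_pow (μ : R) (m : ℕ) :
    2 * μ ^ (m + 1) * ∑ k ∈ range (m + 1), ((m + k).choose k : R) * (1 - μ) ^ k =
      1 - (1 - 2 * μ) * ∑ j ∈ range (m + 1), (j.centralBinom : R) * (μ * (1 - μ)) ^ j := by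
  induction m with
  | zero => simp
  | succ m ih =>
    have step := two_mul_one_sub_mul_sum_choose_mul_pow (1 - μ) m
    rw [sub_sub_cancel] at step
    rw [sum_range_succ (fun j => (j.centralBinom : R) * (μ * (1 - μ)) ^ j), mul_pow]
    linear_combination μ ^ (m + 1) * step + ih

end PolynomialIdentity

theorem mul_cos_sq_add_mul_sin_sq_pos {a b : ℝ} (ha : 0 < a) (hb : 0 < b) (θ : ℝ) :
    0 < a * cos θ ^ 2 + b * sin θ ^ 2 := by
  nlinarith [min_le_left a b, min_le_right a b, lt_min ha hb, sq_nonneg (sin θ),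
    sq_nonneg (cos θ), cos_sq_add_sin_sq θ]

/-- The left side is the continuous branch of `arctan (p / q * tan θ)` across the poles of `tan`. -/
theorem hasDerivAt_add_arctan_sin_mul_cos_div {p q : ℝ} (hp : 0 < p) (hq : 0 < q) (θ : ℝ) :
    HasDerivAt
      (fun θ => θ + arctan ((p - q) * sin θ * cos θ / (q * cos θ ^ 2 + p * sin θ ^ 2)))
      (p * q / (q ^ 2 * cos θ ^ 2 + p ^ 2 * sin θ ^ 2)) θ := by
  have hD := mul_cos_sq_add_mul_sin_sq_pos hq hp θ
  have hE := mul_cos_sq_add_mul_sin_sq_pos (pow_pos hq 2) (pow_pos hp 2) θ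
  have hsc := sin_sq_add_cos_sq θ
  have hw : HasDerivAt (fun θ => (p - q) * sin θ * cos θ / (q * cos θ ^ 2 + p * sin θ ^ 2))
      ((p - q) * (q * cos θ ^ 2 - p * sin θ ^ 2) / (q * cos θ ^ 2 + p * sin θ ^ 2) ^ 2) θ := by
    have hN := ((hasDerivAt_sin θ).const_mul (p - q)).mul (hasDerivAt_cos θ)
    have hD' := (((hasDerivAt_cos θ).pow 2).const_mul q).add
      (((hasDerivAt_sin θ).pow 2).const_mul p)
    refine (hN.div hD' hD.ne').congr_deriv ?_
    simp only [Pi.mul_apply, Pi.add_apply, Pi.pow_apply]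
    field_simp
    linear_combination (p - q) * (q * cos θ ^ 2 - p * sin θ ^ 2) * hsc
  refine ((hasDerivAt_id' θ).add hw.arctan).congr_deriv ?_
  have hsq : 1 + ((p - q) * sin θ * cos θ / (q * cos θ ^ 2 + p * sin θ ^ 2)) ^ 2 =
      (q ^ 2 * cos θ ^ 2 + p ^ 2 * sin θ ^ 2) / (q * cos θ ^ 2 + p * sin θ ^ 2) ^ 2 := by
    field_simp
    linear_combination (q ^ 2 * cos θ ^ 2 + p ^ 2 * sin θ ^ 2) * hsc
  rw [hsq]
  field_simp
  linear_combination p * q * hsc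

theorem integral_mul_div_sq_mul_cos_sq_add_sq_mul_sin_sq {p q : ℝ} (hp : 0 < p) (hq : 0 < q) :
    ∫ θ in (0)..(π / 2), p * q / (q ^ 2 * cos θ ^ 2 + p ^ 2 * sin θ ^ 2) = π / 2 := by
  have hcont : Continuous fun θ => p * q / (q ^ 2 * cos θ ^ 2 + p ^ 2 * sin θ ^ 2) :=
    continuous_const.div (by fun_prop) fun θ =>
      (mul_cos_sq_add_mul_sin_sq_pos (pow_pos hq 2) (pow_pos hp 2) θ).ne'
  rw [integral_eq_sub_of_hasDerivAt (fun θ _ => hasDerivAt_add_arctan_sin_mul_cos_div hp hq θ)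
    (hcont.intervalIntegrable _ _)]
  simp

theorem integral_inv_sin_sq_add {c : ℝ} (hc : 0 < c) :
    ∫ θ in (0)..(π / 2), (sin θ ^ 2 + c)⁻¹ = π / (2 * √(c * (1 + c))) := by
  have hp : 0 < √(1 + c) := by positivity
  have hq : 0 < √c := by positivity
  have h := integral_mul_div_sq_mul_cos_sq_add_sq_mul_sin_sq hp hq
  have hden (θ : ℝ) : √c ^ 2 * cos θ ^ 2 + √(1 + c) ^ 2 * sin θ ^ 2 = sin θ ^ 2 + c := by
    rw [sq_sqrt hc.le, sq_sqrt (by positivity)]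
    linear_combination c * cos_sq_add_sin_sq θ
  simp only [hden, div_eq_mul_inv (√(1 + c) * √c), integral_const_mul] at h
  rw [sqrt_mul hc.le, eq_div_iff (by positivity)]
  linear_combination 2 * h

theorem hasDerivAt_sin_pow_mul_cos_div {c : ℝ} (hc : 0 < c) (n : ℕ) (θ : ℝ) :
    HasDerivAt (fun θ => sin θ ^ (2 * n + 1) * cos θ / (sin θ ^ 2 + c) ^ (n + 1))
      ((2 * n + 1) * ((sin θ ^ 2) ^ n / (sin θ ^ 2 + c) ^ (n + 1)) -
        2 * (n + 1) * (1 + c) * ((sin θ ^ 2) ^ (n + 1) / (sin θ ^ 2 + c) ^ (n + 2))) θ := by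
  have hpos : 0 < sin θ ^ 2 + c := by positivity
  have hN := ((hasDerivAt_sin θ).pow (2 * n + 1)).mul (hasDerivAt_cos θ)
  have hD := (((hasDerivAt_sin θ).pow 2).add_const c).pow (n + 1)
  refine (hN.div hD (pow_pos hpos _).ne').congr_deriv ?_
  simp only [Pi.mul_apply, Pi.pow_apply, Nat.add_sub_cancel, pow_succ, pow_mul]
  have hY : (sin θ ^ 2 + c) ^ n ≠ 0 := (pow_pos hpos n).ne'
  field_simp
  push_cast
  linear_combination (sin θ ^ 2) ^ n * ((2 * n + 1) * (sin θ ^ 2 + c) - 2 * (n + 1) * sin θ ^ 2) *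
    sin_sq_add_cos_sq θ

theorem continuous_sin_sq_pow_div_add_pow {c : ℝ} (hc : 0 < c) (n m : ℕ) :
    Continuous fun θ => (sin θ ^ 2) ^ n / (sin θ ^ 2 + c) ^ m :=
  (by fun_prop : Continuous fun θ => (sin θ ^ 2) ^ n).div (by fun_prop) fun θ => by positivity

theorem integral_sin_sq_pow_div_add_pow_succ {c : ℝ} (hc : 0 < c) (n : ℕ) :
    2 * (n + 1) * (1 + c) * ∫ θ in (0)..(π / 2), (sin θ ^ 2) ^ (n + 1) / (sin θ ^ 2 + c) ^ (n + 2) =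
      (2 * n + 1) * ∫ θ in (0)..(π / 2), (sin θ ^ 2) ^ n / (sin θ ^ 2 + c) ^ (n + 1) := by
  have hI (n m : ℕ) := (continuous_sin_sq_pow_div_add_pow hc n m).intervalIntegrable
    (μ := MeasureTheory.volume) 0 (π / 2)
  have h := integral_eq_sub_of_hasDerivAt (fun θ _ => hasDerivAt_sin_pow_mul_cos_div hc n θ)
    (((hI n (n + 1)).const_mul _).sub ((hI (n + 1) (n + 2)).const_mul _))
  rw [integral_sub ((hI _ _).const_mul _) ((hI _ _).const_mul _), integral_const_mul,
    integral_const_mul] at h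
  simp only [cos_pi_div_two, sin_zero, zero_pow (Nat.succ_ne_zero _), mul_zero, zero_mul, zero_div,
    sub_self] at h
  linarith

theorem integral_sin_sq_pow_div_add_pow {c : ℝ} (hc : 0 < c) (n : ℕ) :
    ∫ θ in (0)..(π / 2), (sin θ ^ 2) ^ n / (sin θ ^ 2 + c) ^ (n + 1) =
      π * n.centralBinom / (2 * √(c * (1 + c)) * (4 * (1 + c)) ^ n) := by
  induction n with
  | zero => simpa using integral_inv_sin_sq_add hc
  | succ n ih =>
    have h := integral_sin_sq_pow_div_add_pow_succ hc n
    have hbinom : ((n + 1) * (n + 1).centralBinom : ℝ) = 2 * (2 * n + 1) * n.centralBinom := by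
      exact_mod_cast Nat.succ_mul_centralBinom_succ n
    rw [ih] at h
    have hr : 0 < √(c * (1 + c)) := by positivity
    rw [eq_div_iff (by positivity), show n + 1 + 1 = n + 2 from rfl]
    field_simp at h
    refine mul_left_cancel₀ (n.cast_add_one_ne_zero (R := ℝ)) ?_
    linear_combination 2 * h - π * hbinom

theorem integral_sin_sq_div_add_pow_succ {c : ℝ} (hc : 0 < c) (n : ℕ) :
    ∫ θ in (0)..(π / 2), (sin θ ^ 2 / (sin θ ^ 2 + c)) ^ (n + 1) =
      (∫ θ in (0)..(π / 2), (sin θ ^ 2 / (sin θ ^ 2 + c)) ^ n) -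
        c * ∫ θ in (0)..(π / 2), (sin θ ^ 2) ^ n / (sin θ ^ 2 + c) ^ (n + 1) := by
  have hI (m : ℕ) : IntervalIntegrable (fun θ => (sin θ ^ 2 / (sin θ ^ 2 + c)) ^ m)
      MeasureTheory.volume 0 (π / 2) := by
    simpa only [div_pow] using (continuous_sin_sq_pow_div_add_pow hc m m).intervalIntegrable _ _
  rw [← integral_const_mul, eq_sub_iff_add_eq, ← integral_add (hI _)
    (((continuous_sin_sq_pow_div_add_pow hc n (n + 1)).intervalIntegrable _ _).const_mul c)]
  refine integral_congr fun θ _ => ?_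
  have hpos : 0 < sin θ ^ 2 + c := by positivity
  simp only [div_pow]
  field_simp
  ring

theorem integral_sin_sq_div_add_pow {c : ℝ} (hc : 0 < c) (n : ℕ) :
    ∫ θ in (0)..(π / 2), (sin θ ^ 2 / (sin θ ^ 2 + c)) ^ n =
      π / 2 * (1 - √(c / (1 + c)) *
        ∑ j ∈ range n, (j.centralBinom : ℝ) * (4 * (1 + c))⁻¹ ^ j) := by
  have hsqrt : c / √(c * (1 + c)) = √(c / (1 + c)) := by
    rw [sqrt_div hc.le, sqrt_mul hc.le, ← div_div, div_sqrt]
  induction n with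
  | zero => simp
  | succ n ih =>
    rw [integral_sin_sq_div_add_pow_succ hc, ih, integral_sin_sq_pow_div_add_pow hc,
      sum_range_succ, ← hsqrt]
    simp only [inv_pow]
    field_simp
    ring

theorem stmt_11 (a : ℝ) (ha : 0 < a) (Nr : ℕ) (hNr : 0 < Nr) :
    (1 / π) * ∫ θ in (0:ℝ)..(π / 2),
        ((4 * Real.sin θ ^ 2) / (4 * Real.sin θ ^ 2 + a)) ^ Nr =
      ((1 / 2) * (1 - Real.sqrt (a / (4 + a)))) ^ Nr *
        ∑ k ∈ Finset.range Nr,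
          (Nat.choose (Nr - 1 + k) k : ℝ) *
            (1 - (1 / 2) * (1 - Real.sqrt (a / (4 + a)))) ^ k := by
  obtain ⟨m, rfl⟩ := Nat.exists_eq_add_one_of_ne_zero hNr.ne'
  have hc : 0 < a / 4 := by positivity
  have hintegrand (θ : ℝ) :
      4 * sin θ ^ 2 / (4 * sin θ ^ 2 + a) = sin θ ^ 2 / (sin θ ^ 2 + a / 4) := by
    rw [div_eq_div_iff (by positivity) (by positivity)]
    ring
  have hratio : a / (4 + a) = a / 4 / (1 + a / 4) := by field_simp
  have hμ : 1 / 2 * (1 - √(a / (4 + a))) * (1 - 1 / 2 * (1 - √(a / (4 + a)))) =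
      (4 * (1 + a / 4))⁻¹ := by
    rw [show ∀ s : ℝ, 1 / 2 * (1 - s) * (1 - 1 / 2 * (1 - s)) = (1 - s ^ 2) / 4 by intro s; ring,
      sq_sqrt (by positivity)]
    field_simp
    ring
  have hpoly := two_mul_pow_mul_sum_choose_mul_pow (1 / 2 * (1 - √(a / (4 + a)))) m
  rw [hμ] at hpoly
  simp only [hintegrand, integral_sin_sq_div_add_pow hc, Nat.add_sub_cancel, ← hratio]
  rw [one_div_mul_eq_div, mul_div_right_comm, div_div_cancel_left' pi_ne_zero]
  linear_combination (-1 / 2) * hpoly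
end

section
/- Fix a > 0 and positive integer N_r. As ρ → ∞, the ratio of (1/π)∫₀^{π/2} (4 sin²θ/(4 sin²θ + ρa))^{N_r} dθ to (1/2)(4/(ρa))^{N_r}·(2N_r−1)!!/(2N_r)!! tends to 1. -/
/-!
With t = ρa, the integrand is (4/t)^N · (sin²θ · t/(4 sin²θ + t))^N. The second factor is dominated
by sin^{2N} θ and converges to it pointwise as t → ∞, so by dominated convergence the rescaled
integral tends to the Wallis integral ∫₀^{π/2} sin^{2N} θ dθ = (π/2)(2N−1)!!/(2N)!!.
-/

open Real Filter Topology

theorem integral_sin_pow_two_mul_zero_pi_div_two (n : ℕ) :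
    ∫ x in (0:ℝ)..(π / 2), sin x ^ (2 * n) =
      π / 2 * ((2 * n - 1).doubleFactorial / (2 * n).doubleFactorial) := by
  induction n with
  | zero => simp
  | succ k ih =>
    have hodd : (2 * (k + 1) - 1).doubleFactorial = (2 * k + 1) * (2 * k - 1).doubleFactorial := by
      rw [show 2 * (k + 1) - 1 = 2 * k + 1 by omega, Nat.doubleFactorial_add_one]
    have heven : (2 * (k + 1)).doubleFactorial = (2 * k + 2) * (2 * k).doubleFactorial :=
      Nat.doubleFactorial_add_two _
    rw [mul_add, mul_one, integral_sin_pow, ih, ← mul_add_one 2 k, hodd, heven]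
    simp only [sin_zero, cos_pi_div_two, zero_pow (Nat.succ_ne_zero _), zero_mul, mul_zero, sub_self,
      zero_div, zero_add]
    push_cast
    field_simp

theorem tendsto_div_add_self_atTop (y : ℝ) : Tendsto (fun t : ℝ => t / (y + t)) atTop (𝓝 1) := by
  have h : Tendsto (fun t : ℝ => 1 - y / (y + t)) atTop (𝓝 (1 - 0)) :=
    (tendsto_const_nhds.div_atTop (tendsto_atTop_add_const_left _ _ tendsto_id)).const_sub 1
  rw [sub_zero] at h
  refine h.congr' ?_
  filter_upwards [eventually_gt_atTop (-y)] with t ht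
  field_simp [show y + t ≠ 0 by linarith]
  ring

theorem div_add_self_mem_Icc {y t : ℝ} (hy : 0 ≤ y) (ht : 0 < t) : t / (y + t) ∈ Set.Icc 0 1 :=
  ⟨by positivity, div_le_one_of_le₀ (by linarith) (by positivity)⟩

theorem tendsto_integral_mul_div_add_pow {f g : ℝ → ℝ} (hf : Continuous f) (hg : Continuous g)
    (hg0 : ∀ x, 0 ≤ g x) (a b : ℝ) (N : ℕ) :
    Tendsto (fun t => ∫ x in a..b, (f x * (t / (g x + t))) ^ N) atTop
      (𝓝 (∫ x in a..b, f x ^ N)) := by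
  refine intervalIntegral.tendsto_integral_filter_of_dominated_convergence
    (fun x => |f x| ^ N) ?_ ?_ ((by fun_prop : Continuous _).intervalIntegrable _ _) ?_
  · filter_upwards [eventually_gt_atTop 0] with t ht
    have : ∀ x, g x + t ≠ 0 := fun x => by linarith [hg0 x]
    exact Continuous.aestronglyMeasurable (by fun_prop (disch := exact this))
  · filter_upwards [eventually_gt_atTop 0] with t ht
    refine Filter.Eventually.of_forall fun x _ => ?_
    obtain ⟨h0, h1⟩ := div_add_self_mem_Icc (hg0 x) ht
    rw [norm_pow, norm_mul, Real.norm_eq_abs, Real.norm_of_nonneg h0]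
    exact pow_le_pow_left₀ (by positivity) (mul_le_of_le_one_right (abs_nonneg _) h1) N
  · refine Filter.Eventually.of_forall fun x _ => ?_
    simpa using ((tendsto_div_add_self_atTop (g x)).const_mul (f x)).pow N

theorem stmt_13_general (a : ℝ) (ha : 0 < a) (Nr : ℕ) :
    Tendsto (fun ρ : ℝ =>
        ((1 / π) * ∫ θ in (0:ℝ)..(π / 2),
            ((4 * Real.sin θ ^ 2) / (4 * Real.sin θ ^ 2 + ρ * a)) ^ Nr) /
          ((1 / 2) * (4 / (ρ * a)) ^ Nr *
            (((2 * Nr - 1).doubleFactorial : ℝ) / ((2 * Nr).doubleFactorial : ℝ))))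
      atTop (nhds 1) := by
  set c : ℝ := (2 * Nr - 1).doubleFactorial / (2 * Nr).doubleFactorial
  have hc : 0 < c := by positivity
  have hlim := (tendsto_integral_mul_div_add_pow (f := fun θ => sin θ ^ 2)
    (g := fun θ => 4 * sin θ ^ 2) (by fun_prop) (by fun_prop) (fun θ => by positivity)
    0 (π / 2) Nr).const_mul (2 / (π * c))
  simp only [← pow_mul, integral_sin_pow_two_mul_zero_pi_div_two] at hlim
  rw [show 2 / (π * c) * (π / 2 * c) = 1 by field_simp] at hlim
  have hratio : Tendsto (fun t : ℝ =>
      ((1 / π) * ∫ θ in (0:ℝ)..(π / 2), ((4 * sin θ ^ 2) / (4 * sin θ ^ 2 + t)) ^ Nr) /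
        ((1 / 2) * (4 / t) ^ Nr * c)) atTop (𝓝 1) := by
    refine hlim.congr' ?_
    filter_upwards [eventually_gt_atTop 0] with t ht
    have hintegrand : ∀ θ, (4 * sin θ ^ 2 / (4 * sin θ ^ 2 + t)) ^ Nr =
        (4 / t) ^ Nr * (sin θ ^ 2 * (t / (4 * sin θ ^ 2 + t))) ^ Nr := fun θ => by
      rw [← mul_pow]
      field_simp [show 4 * sin θ ^ 2 + t ≠ 0 by positivity]
    simp only [hintegrand, intervalIntegral.integral_const_mul]
    generalize ∫ θ in (0:ℝ)..(π / 2), (sin θ ^ 2 * (t / (4 * sin θ ^ 2 + t))) ^ Nr = I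
    field_simp
  exact hratio.comp (tendsto_id.atTop_mul_const ha)

theorem stmt_13 (a : ℝ) (ha : 0 < a) (Nr : ℕ) (hNr : 0 < Nr) :
    Tendsto (fun ρ : ℝ =>
        ((1 / π) * ∫ θ in (0:ℝ)..(π / 2),
            ((4 * Real.sin θ ^ 2) / (4 * Real.sin θ ^ 2 + ρ * a)) ^ Nr) /
          ((1 / 2) * (4 / (ρ * a)) ^ Nr *
            (((2 * Nr - 1).doubleFactorial : ℝ) / ((2 * Nr).doubleFactorial : ℝ))))
      atTop (nhds 1) :=
  stmt_13_general a ha Nr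
end

section
/- For positive reals λ₁ > 0 > λ₂ (so λ₁ − λ₂ > 0) and positive integer N_r, the quantity P = (−λ₂/(λ₁ − λ₂))^{N_r} · Σ_{k=0}^{N_r−1} C(N_r+k−1, k) (λ₁/(λ₁ − λ₂))^k lies strictly between 0 and 1. -/
open Finset

/-!
With `r = λ₁ / (λ₁ - λ₂) ∈ (0, 1)` we have `-λ₂ / (λ₁ - λ₂) = 1 - r`, and `P` is `(1 - r) ^ N`
times a partial sum of the negative binomial series `∑ₖ C(N + k - 1, k) rᵏ = (1 - r)⁻ᴺ`.
All terms of that series are positive, so `P` is positive and the partial sum falls strictly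
short of the full one, i.e. `P < 1`.
-/

lemma choose_add_mul_pow_pos {r : ℝ} (hr₀ : 0 < r) (n k : ℕ) :
    0 < ((k + n).choose n : ℝ) * r ^ k :=
  mul_pos (mod_cast Nat.choose_pos (Nat.le_add_left n k)) (pow_pos hr₀ k)

lemma sum_range_choose_mul_pow_lt_one_div {r : ℝ} (hr₀ : 0 < r) (hr₁ : r < 1) (n m : ℕ) :
    ∑ k ∈ range m, ((k + n).choose n : ℝ) * r ^ k < 1 / (1 - r) ^ (n + 1) := by
  have hr : ‖r‖ < 1 := by rwa [Real.norm_of_nonneg hr₀.le]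
  calc ∑ k ∈ range m, ((k + n).choose n : ℝ) * r ^ k
      < ∑ k ∈ range (m + 1), ((k + n).choose n : ℝ) * r ^ k := by
        rw [sum_range_succ]
        exact lt_add_of_pos_right _ (choose_add_mul_pow_pos hr₀ n m)
    _ ≤ ∑' k, ((k + n).choose n : ℝ) * r ^ k :=
        (summable_choose_mul_geometric_of_norm_lt_one n hr).sum_le_tsum _
          fun k _ ↦ (choose_add_mul_pow_pos hr₀ n k).le
    _ = 1 / (1 - r) ^ (n + 1) := tsum_choose_mul_geometric_of_norm_lt_one n hr

lemma negBinomial_partial_sum_mem_Ioo {r : ℝ} (hr₀ : 0 < r) (hr₁ : r < 1) (n : ℕ) :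
    0 < (1 - r) ^ (n + 1) * ∑ k ∈ range (n + 1), ((k + n).choose n : ℝ) * r ^ k ∧
      (1 - r) ^ (n + 1) * ∑ k ∈ range (n + 1), ((k + n).choose n : ℝ) * r ^ k < 1 := by
  have hq : 0 < (1 - r) ^ (n + 1) := pow_pos (sub_pos.2 hr₁) _
  refine ⟨mul_pos hq (sum_pos (fun k _ ↦ choose_add_mul_pow_pos hr₀ n k)
    nonempty_range_add_one), ?_⟩
  calc (1 - r) ^ (n + 1) * ∑ k ∈ range (n + 1), ((k + n).choose n : ℝ) * r ^ k
      < (1 - r) ^ (n + 1) * (1 / (1 - r) ^ (n + 1)) :=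
        mul_lt_mul_of_pos_left (sum_range_choose_mul_pow_lt_one_div hr₀ hr₁ n _) hq
    _ = 1 := mul_one_div_cancel hq.ne'

theorem stmt_19 (lam1 lam2 : ℝ) (h1 : 0 < lam1) (h2 : lam2 < 0) (Nr : ℕ) (hNr : 0 < Nr) :
    0 < (-lam2 / (lam1 - lam2)) ^ Nr *
        ∑ k ∈ Finset.range Nr,
          (Nat.choose (Nr + k - 1) k : ℝ) * (lam1 / (lam1 - lam2)) ^ k ∧
      (-lam2 / (lam1 - lam2)) ^ Nr *
        ∑ k ∈ Finset.range Nr,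
          (Nat.choose (Nr + k - 1) k : ℝ) * (lam1 / (lam1 - lam2)) ^ k < 1 := by
  have hd : 0 < lam1 - lam2 := by linarith
  have hq : -lam2 / (lam1 - lam2) = 1 - lam1 / (lam1 - lam2) := by
    field_simp
    ring
  have hr₁ : lam1 / (lam1 - lam2) < 1 := (div_lt_one hd).2 (by linarith)
  obtain ⟨n, rfl⟩ : ∃ n, Nr = n + 1 := ⟨Nr - 1, by omega⟩
  have hchoose : ∀ k, (n + 1 + k - 1).choose k = (k + n).choose n := fun k ↦ by
    rw [show n + 1 + k - 1 = k + n by omega, Nat.choose_symm_add]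
  simp only [hq, hchoose]
  exact negBinomial_partial_sum_mem_Ioo (div_pos h1 hd) hr₁ n
end
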